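/- Let T be a triangulated category, X an object, r a homogeneous central element of positive degree with Koszul triangle X → Σ^{|r|}X → X//r → ΣX, and Y any object. If there exists an integer n such that Hom_T(X, ΣⁱY) = 0 for n ≤ i ≤ n + |r| - 1, and if Hom_T(X//r, ΣⁱY) = 0 for all i ∈ ℤ, then Hom_T(X, ΣⁱY) = 0 for all i ∈ ℤ. -/

import Mathlib

/-!
STATEMENT 2: With a Koszul triangle `X → Σ^{|r|}X → X//r → ΣX` (`|r| > 0`), if
`Hom_T(X, ΣⁱY) = 0` for `n ≤ i ≤ n + |r| - 1` for some integer `n`, and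
`Hom_T(X//r, ΣⁱY) = 0` for all `i ∈ ℤ`, then `Hom_T(X, ΣⁱY) = 0` for all `i ∈ ℤ`.
-/
open CategoryTheory Category Limits Pretriangulated
universe v u

lemma shifted_hom_zero
    {C : Type u} [Category.{v} C] [Preadditive C] [HasShift C ℤ]
    [∀ n : ℤ, (shiftFunctor C n).Additive]
    (Y A : C) (e i j : ℤ) (hij : j + e = i)
    (hA : ∀ (u : A ⟶ Y⟦j⟧), u = 0) (u : A⟦e⟧ ⟶ Y⟦i⟧) : u = 0 := by
  have h1 : (shiftFunctorCompIsoId C e (-e) (by ring)).inv.app A ≫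
      (shiftFunctor C (-e)).map u ≫ (shiftFunctorAdd' C i (-e) j (by omega)).inv.app Y = 0 :=
    hA _
  have h2 : (shiftFunctor C (-e)).map u = 0 := by
    rw [← cancel_epi ((shiftFunctorCompIsoId C e (-e) (by ring)).inv.app A),
      ← cancel_mono ((shiftFunctorAdd' C i (-e) j (by omega)).inv.app Y)]
    simpa using h1
  apply (shiftFunctor C (-e)).map_injective
  rw [h2, Functor.map_zero]

theorem gap_and_cone_vanishing_gives_total_vanishing
    (C : Type u) [Category.{v} C] [Preadditive C] [HasZeroObject C] [HasShift C ℤ]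
    [∀ n : ℤ, (shiftFunctor C n).Additive] [Pretriangulated C]
    (X Z : C) (d : ℤ) (hd : 0 < d)
    (φ : X ⟶ X⟦d⟧) (g : X⟦d⟧ ⟶ Z) (h : Z ⟶ X⟦(1 : ℤ)⟧)
    (hT : Triangle.mk φ g h ∈ distTriang C)
    (Y : C) (n : ℤ)
    -- the vanishing gap of length `|r|`
    (hgap : ∀ i : ℤ, n ≤ i → i ≤ n + d - 1 → ∀ (u : X ⟶ Y⟦i⟧), u = 0)
    -- total vanishing for the Koszul object
    (hvan : ∀ (i : ℤ) (u : Z ⟶ Y⟦i⟧), u = 0) :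
    ∀ (i : ℤ) (u : X ⟶ Y⟦i⟧), u = 0 := by
  -- step up: vanishing at i - d implies vanishing at i
  have up : ∀ i : ℤ, (∀ u : X ⟶ Y⟦i - d⟧, u = 0) → ∀ u : X ⟶ Y⟦i⟧, u = 0 := by
    intro i hQ u
    have h0 : (Triangle.mk φ g h).invRotate.mor₁ ≫ u = 0 :=
      shifted_hom_zero Y Z (-1) i (i + 1) (by ring) (hvan (i + 1)) _
    obtain ⟨v, hv⟩ := Triangle.yoneda_exact₂ _ (inv_rot_of_distTriang _ hT) u h0
    have hv0 : v = 0 := shifted_hom_zero Y X d i (i - d) (by ring) hQ v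
    rw [hv, hv0]; exact comp_zero
  -- step down: vanishing at i + d implies vanishing at i
  have down : ∀ i : ℤ, (∀ u : X ⟶ Y⟦i + d⟧, u = 0) → ∀ u : X ⟶ Y⟦i⟧, u = 0 := by
    intro i hQ u
    have hv : φ ≫ ((shiftFunctor C d).map u ≫
        (shiftFunctorAdd' C i d (i + d) rfl).inv.app Y) = 0 := hQ _
    obtain ⟨w, hw⟩ := Triangle.yoneda_exact₂ _ hT _ hv
    rw [hvan _ w] at hw
    have hmap : (shiftFunctor C d).map u = 0 := by
      rw [← cancel_mono ((shiftFunctorAdd' C i d (i + d) rfl).inv.app Y), zero_comp]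
      exact hw.trans comp_zero
    apply (shiftFunctor C d).map_injective
    rw [hmap, Functor.map_zero]
  -- all i ≥ n, by induction on an upper bound for i - n
  have ge_all : ∀ m : ℕ, ∀ i : ℤ, n ≤ i → i ≤ n + m → ∀ u : X ⟶ Y⟦i⟧, u = 0 := by
    intro m
    induction m with
    | zero => intro i h1 h2; exact hgap i h1 (by omega)
    | succ k ih =>
      intro i h1 h2
      by_cases hc : i ≤ n + k
      · exact ih i h1 hc
      · by_cases hc' : i ≤ n + d - 1
        · exact hgap i h1 hc'
        · exact up i (ih (i - d) (by omega) (by omega))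
  -- all i, by induction on an upper bound for n - i
  have all : ∀ m : ℕ, ∀ i : ℤ, n - m ≤ i → ∀ u : X ⟶ Y⟦i⟧, u = 0 := by
    intro m
    induction m with
    | zero => intro i h1; exact ge_all (i - n).toNat i (by omega) (by omega)
    | succ k ih =>
      intro i h1
      by_cases hc : n - k ≤ i
      · exact ih i hc
      · exact down i (ih (i + d) (by omega))
  intro i
  exact all (n - i).toNat i (by omega)
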